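/- arXiv:2306.16965 — 10 statements merged into one kernel-verified Lean document; each statement's English description precedes it below -/
import Mathlib

section
/- For all nonnegative integers i and k with k ≥ i, the sum over j from 0 to i of C(i,j)/C(k,j) equals (k+1)/(k+1-i). -/
/-!
Write `k = i + n`. From `C(i+n, i) C(i, j) = C(i+n, j) C(i+n-j, n)`, every term `C(i, j) / C(i+n, j)`
equals `C(i+n-j, n) / C(i+n, n)`, so the numerators add up by the hockey-stick identity to
`C(i+n+1, n+1)`, and `C(i+n+1, n+1) / C(i+n, n) = (i+n+1) / (n+1)`.
-/

open Finset

namespace Nat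

theorem choose_add_mul_choose_add_sub {i j : ℕ} (n : ℕ) (hj : j ≤ i) :
    (i + n).choose n * i.choose j = (i + n).choose j * (i + n - j).choose n := by
  rw [← choose_symm_add, choose_mul hj, choose_symm_of_eq_add (by omega : i + n - j = i - j + n)]

theorem sum_range_choose_add_sub (i n : ℕ) :
    ∑ j ∈ range (i + 1), (i + n - j).choose n = (i + n + 1).choose (n + 1) := by
  rw [← sum_range_reflect, ← sum_range_add_choose]
  refine sum_congr rfl fun j hj => ?_
  rw [mem_range] at hj
  congr 1
  omega

end Nat

variable {K : Type*} [Field K] [CharZero K]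

theorem choose_div_choose_add {i j : ℕ} (n : ℕ) (hj : j ≤ i) :
    (i.choose j : K) / (i + n).choose j = (i + n - j).choose n / (i + n).choose n := by
  have hpos : ∀ m ≤ i + n, ((i + n).choose m : K) ≠ 0 := fun m hm =>
    Nat.cast_ne_zero.mpr (Nat.choose_pos hm).ne'
  rw [div_eq_div_iff (hpos j (by omega)) (hpos n (by omega))]
  norm_cast
  linarith [Nat.choose_add_mul_choose_add_sub n hj]

theorem sum_range_choose_div_choose_add (i n : ℕ) :
    ∑ j ∈ range (i + 1), (i.choose j : K) / (i + n).choose j = (i + n + 1) / (n + 1) := by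
  have hn : ((i + n).choose n : K) ≠ 0 := Nat.cast_ne_zero.mpr (Nat.choose_pos (by omega)).ne'
  rw [sum_congr rfl fun j hj => choose_div_choose_add n (Nat.lt_succ_iff.mp (mem_range.mp hj)),
    ← sum_div, ← Nat.cast_sum, Nat.sum_range_choose_add_sub,
    div_eq_div_iff hn (Nat.cast_add_one_ne_zero n)]
  exact_mod_cast (Nat.add_one_mul_choose_eq (i + n) n).symm

theorem stmt_0 (i k : ℕ) (h : i ≤ k) :
    ∑ j ∈ Finset.range (i + 1), (i.choose j : ℚ) / (k.choose j : ℚ)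
      = ((k : ℚ) + 1) / ((k : ℚ) + 1 - (i : ℚ)) := by
  obtain ⟨n, rfl⟩ := Nat.exists_eq_add_of_le h
  rw [sum_range_choose_div_choose_add]
  push_cast
  ring_nf
end

section
/- For every positive integer k, the sum over i from 0 to k of [C(k,i) * C(k,k-i) / C(2k,k)] * 1/(k+1-i) equals (2k+1)/(k+1)^2. -/
theorem stmt_1 (k : ℕ) (hk : 1 ≤ k) :
    ∑ i ∈ Finset.range (k + 1),
        ((k.choose i : ℚ) * (k.choose (k - i) : ℚ) / ((2 * k).choose k : ℚ))
          * (1 / ((k : ℚ) + 1 - (i : ℚ)))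
      = (2 * (k : ℚ) + 1) / ((k : ℚ) + 1) ^ 2 := by
  have hC : ((2 * k).choose k : ℚ) ≠ 0 := by
    exact_mod_cast (Nat.choose_pos (by omega)).ne'
  have hk1 : ((k : ℚ) + 1) ≠ 0 := by positivity
  have hstep : ∀ i ∈ Finset.range (k + 1),
      ((k.choose i : ℚ) * (k.choose (k - i) : ℚ) / ((2 * k).choose k : ℚ))
        * (1 / ((k : ℚ) + 1 - (i : ℚ)))
      = ((k.choose i * (k + 1).choose (k + 1 - i) : ℕ) : ℚ)
        / (((k + 1) : ℚ) * ((2 * k).choose k : ℚ)) := by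
    intro i hi
    rw [Finset.mem_range] at hi
    have hik : i ≤ k := by omega
    have h1 : ((k : ℚ) + 1 - (i : ℚ)) = ((k - i + 1 : ℕ) : ℚ) := by
      push_cast [Nat.cast_sub hik]; ring
    have h2' : ((k : ℚ) + 1) * (k.choose (k - i) : ℚ)
        = ((k + 1).choose (k - i + 1) : ℚ) * ((k - i + 1 : ℕ) : ℚ) := by
      exact_mod_cast Nat.add_one_mul_choose_eq k (k - i)
    have h3 : k + 1 - i = k - i + 1 := by omega
    have hd : ((k : ℚ) + 1 - (i : ℚ)) ≠ 0 := by
      rw [h1]; positivity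
    have h2'' : ((k : ℚ) + 1) * (k.choose (k - i) : ℚ)
        = ((k + 1).choose (k - i + 1) : ℚ) * ((k : ℚ) + 1 - (i : ℚ)) := by
      rw [h1]; exact h2'
    rw [h3, Nat.cast_mul, mul_one_div, div_div,
      div_eq_div_iff (by positivity) (by positivity)]
    linear_combination ((k.choose i : ℚ) * ((2 * k).choose k : ℚ)) * h2''
  rw [Finset.sum_congr rfl hstep, ← Finset.sum_div, ← Nat.cast_sum]
  have hvan2 : ∑ i ∈ Finset.range (k + 2), k.choose i * (k + 1).choose (k + 1 - i)
      = (2 * k + 1).choose (k + 1) := by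
    have h := Nat.add_choose_eq k (k + 1) (k + 1)
    rw [Finset.Nat.sum_antidiagonal_eq_sum_range_succ_mk] at h
    have hkk : k + (k + 1) = 2 * k + 1 := by ring
    rw [hkk] at h
    simpa using h.symm
  have hz : k.choose (k + 1) = 0 := Nat.choose_eq_zero_of_lt (Nat.lt_succ_self k)
  rw [Finset.sum_range_succ, hz, zero_mul, add_zero] at hvan2
  rw [hvan2]
  have h4' : (2 * (k : ℚ) + 1) * ((2 * k).choose k : ℚ)
      = ((2 * k + 1).choose (k + 1) : ℚ) * ((k : ℚ) + 1) := by
    exact_mod_cast Nat.add_one_mul_choose_eq (2 * k) k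
  rw [div_eq_div_iff (by positivity) (by positivity)]
  linear_combination (-((k : ℚ) + 1)) * h4'
end

section
/- For all nonnegative integers i and k with k + 2 > 2^i, the sum over j from 0 to 2^i - 1 of [C(k,j) * C(k, 2^i - 1 - j) / C(2k, 2^i - 1)] * 1/(2^i - j) is at most 2/2^i. -/
/-!
Absorption, `C(k, m) / (m + 1) = C(k + 1, m + 1) / (k + 1)`, turns the weighted sum into
`(1 / (k + 1)) ∑_{j < n} C(k, j) C(k + 1, n - j)`, a truncated Vandermonde sum bounded by
`C(2k + 1, n)`. Absorbing once more, `C(2k + 1, n) = (2k + 1) / n · C(2k, n - 1)`, and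
`(2k + 1) / (k + 1) ≤ 2` gives the bound `2 / n` for every `n ≥ 1`, in particular for `n = 2 ^ i`.
-/

open Finset

theorem choose_div_add_one_eq {K : Type*} [Field K] [CharZero K] (k m : ℕ) :
    (k.choose m : K) / (m + 1) = (k + 1).choose (m + 1) / (k + 1) := by
  rw [div_eq_div_iff (Nat.cast_add_one_ne_zero m) (Nat.cast_add_one_ne_zero k)]
  exact_mod_cast (mul_comm _ _).trans (Nat.add_one_mul_choose_eq k m)

theorem sum_range_choose_mul_choose_le (m n p : ℕ) :
    ∑ j ∈ range p, m.choose j * n.choose (p - j) ≤ (m + n).choose p := by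
  rw [Nat.add_choose_eq, Nat.sum_antidiagonal_eq_sum_range_succ_mk]
  exact sum_le_sum_of_subset (range_subset_range.2 p.le_succ)

theorem sum_choose_mul_choose_div_le {K : Type*} [Field K] [LinearOrder K] [IsStrictOrderedRing K]
    (k n : ℕ) (hn : 0 < n) :
    ∑ j ∈ range n, (k.choose j * k.choose (n - 1 - j) : K) / (n - j)
      ≤ 2 / n * (2 * k).choose (n - 1) := by
  have absorb : ∀ j ∈ range n, (k.choose j * k.choose (n - 1 - j) : K) / (n - j)
      = (k.choose j * (k + 1).choose (n - j) : ℕ) / (k + 1) := by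
    intro j hj
    have hjn : n - 1 - j + 1 = n - j := by rw [mem_range] at hj; omega
    have hcast : (n : K) - j = ((n - 1 - j : ℕ) : K) + 1 := by
      rw [← Nat.cast_add_one, hjn, Nat.cast_sub (mem_range.1 hj).le]
    rw [hcast, mul_div_assoc, choose_div_add_one_eq, hjn]
    push_cast
    ring
  have vandermonde : ∑ j ∈ range n, k.choose j * (k + 1).choose (n - j) ≤ (2 * k + 1).choose n := by
    simpa [two_mul, add_assoc] using sum_range_choose_mul_choose_le k (k + 1) n
  have top : ((2 * k + 1).choose n : K) = (2 * k + 1) / n * (2 * k).choose (n - 1) := by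
    have h := choose_div_add_one_eq (K := K) (2 * k) (n - 1)
    rw [Nat.sub_add_cancel hn, Nat.cast_sub hn, Nat.cast_one, sub_add_cancel] at h
    push_cast at h
    field_simp at h ⊢
    linear_combination -h
  have hk : (0 : K) < k + 1 := by positivity
  calc ∑ j ∈ range n, (k.choose j * k.choose (n - 1 - j) : K) / (n - j)
      = (∑ j ∈ range n, k.choose j * (k + 1).choose (n - j) : ℕ) / (k + 1) := by
        rw [sum_congr rfl absorb, Nat.cast_sum, sum_div]
    _ ≤ ((2 * k + 1).choose n : K) / (k + 1) := by gcongr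
    _ = (2 * k + 1) / (k + 1) * (1 / n * (2 * k).choose (n - 1)) := by rw [top]; ring
    _ ≤ 2 * (1 / n * (2 * k).choose (n - 1)) := by
        gcongr
        rw [div_le_iff₀ hk]
        linarith
    _ = 2 / n * (2 * k).choose (n - 1) := by ring

theorem stmt_2_general (i k : ℕ) :
    ∑ j ∈ Finset.range (2 ^ i),
        ((k.choose j : ℚ) * (k.choose (2 ^ i - 1 - j) : ℚ)
            / ((2 * k).choose (2 ^ i - 1) : ℚ))
          * (1 / ((2 ^ i : ℚ) - (j : ℚ)))
      ≤ 2 / (2 ^ i : ℚ) := by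
  have key := sum_choose_mul_choose_div_le (K := ℚ) k (2 ^ i) (by positivity)
  push_cast at key
  calc _ = (∑ j ∈ range (2 ^ i), (k.choose j * k.choose (2 ^ i - 1 - j) : ℚ) / (2 ^ i - j))
          / (2 * k).choose (2 ^ i - 1) := by
        rw [sum_div]
        exact sum_congr rfl fun j _ => by ring
    _ ≤ 2 / 2 ^ i := div_le_of_le_mul₀ (by positivity) (by positivity) key

theorem stmt_2 (i k : ℕ) (h : 2 ^ i < k + 2) :
    ∑ j ∈ Finset.range (2 ^ i),
        ((k.choose j : ℚ) * (k.choose (2 ^ i - 1 - j) : ℚ)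
            / ((2 * k).choose (2 ^ i - 1) : ℚ))
          * (1 / ((2 ^ i : ℚ) - (j : ℚ)))
      ≤ 2 / (2 ^ i : ℚ) :=
  stmt_2_general i k
end

section
/- Let G = (N, w) be a complete weighted graph on n vertices with weight function w : pairs of N → ℚ, and let M* be a maximum weight matching of G. Then w(M*) ≥ (1/n) · w(E+), where E+ is the set of edges of strictly positive weight and w(E+) is the sum of their weights. -/
/-- A matching: a set of 2-element edges that are pairwise disjoint. -/
def IsMatching {N : Type*} [DecidableEq N] (M : Finset (Finset N)) : Prop :=
  (∀ e ∈ M, e.card = 2) ∧ ∀ e ∈ M, ∀ f ∈ M, e ≠ f → Disjoint e f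

theorem stmt_5 {N : Type*} [Fintype N] [DecidableEq N] (w : Finset N → ℚ)
    (Mstar : Finset (Finset N)) (hM : IsMatching Mstar)
    (hmax : ∀ M : Finset (Finset N), IsMatching M → ∑ e ∈ M, w e ≤ ∑ e ∈ Mstar, w e) :
    (∑ e ∈ (Finset.powersetCard 2 (Finset.univ : Finset N)).filter (fun e => 0 < w e), w e)
        / (Fintype.card N : ℚ)
      ≤ ∑ e ∈ Mstar, w e := by
  classical
  have hW0 : (0 : ℚ) ≤ ∑ e ∈ Mstar, w e := by
    simpa using hmax ∅ ⟨by simp, by simp⟩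
  set n := Fintype.card N with hn
  by_cases h0 : n = 0
  · rw [h0]
    simp [hW0]
  · haveI : NeZero n := ⟨h0⟩
    set φ : N → ZMod n := fun x => ((Fintype.equivFin N x : ℕ) : ZMod n) with hφdef
    have hφ : Function.Injective φ := by
      intro a b hab
      have ha : ((Fintype.equivFin N a : ℕ) : ZMod n).val = (Fintype.equivFin N a : ℕ) :=
        ZMod.val_cast_of_lt (Fintype.equivFin N a).isLt
      have hb : ((Fintype.equivFin N b : ℕ) : ZMod n).val = (Fintype.equivFin N b : ℕ) :=
        ZMod.val_cast_of_lt (Fintype.equivFin N b).isLt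
      have : (Fintype.equivFin N a : ℕ) = (Fintype.equivFin N b : ℕ) := by
        rw [← ha, ← hb]; simp only [hφdef] at hab; rw [hab]
      exact (Fintype.equivFin N).injective (Fin.ext this)
    set c : Finset N → ZMod n := fun s => ∑ x ∈ s, φ x with hcdef
    set E := (Finset.powersetCard 2 (Finset.univ : Finset N)).filter (fun e => 0 < w e) with hE
    -- each edge with vertex a is determined by a and its color
    have edge_shape : ∀ e ∈ E, ∀ a ∈ e, ∃ b, b ≠ a ∧ e = {a, b} ∧ c e = φ a + φ b := by
      intro e he a ha
      have hcard : e.card = 2 := (Finset.mem_powersetCard.mp (Finset.mem_filter.mp he).1).2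
      have h1 : (e.erase a).card = 1 := by
        rw [Finset.card_erase_of_mem ha, hcard]
      obtain ⟨b, hb⟩ := Finset.card_eq_one.mp h1
      have hba : b ≠ a := by
        have : b ∈ e.erase a := hb ▸ Finset.mem_singleton_self b
        exact Finset.ne_of_mem_erase this
      have heq : e = {a, b} := by
        have := Finset.insert_erase ha
        rw [hb] at this
        rw [← this]
      refine ⟨b, hba, heq, ?_⟩
      show (∑ x ∈ e, φ x) = φ a + φ b
      rw [heq]
      exact Finset.sum_pair (Ne.symm hba)
    have key : ∀ k : ZMod n, IsMatching (E.filter (fun e => c e = k)) := by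
      intro k
      constructor
      · intro e he
        have := (Finset.mem_filter.mp (Finset.mem_filter.mp he).1).1
        exact (Finset.mem_powersetCard.mp this).2
      · intro e he f hf hef
        rw [Finset.disjoint_left]
        intro a hae haf
        obtain ⟨b, hbne, heq, hce⟩ := edge_shape e (Finset.mem_filter.mp he).1 a hae
        obtain ⟨d, hdne, hfq, hcf⟩ := edge_shape f (Finset.mem_filter.mp hf).1 a haf
        have hke : c e = k := (Finset.mem_filter.mp he).2
        have hkf : c f = k := (Finset.mem_filter.mp hf).2
        have : φ a + φ b = φ a + φ d := by rw [← hce, ← hcf, hke, hkf]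
        have hbd : b = d := hφ (add_left_cancel this)
        exact hef (by rw [heq, hfq, hbd])
    have hsum : ∑ e ∈ E, w e = ∑ k : ZMod n, ∑ e ∈ E.filter (fun e => c e = k), w e :=
      (Finset.sum_fiberwise E c w).symm
    have hbound : ∑ e ∈ E, w e ≤ (n : ℚ) * ∑ e ∈ Mstar, w e := by
      rw [hsum]
      calc ∑ k : ZMod n, ∑ e ∈ E.filter (fun e => c e = k), w e
          ≤ ∑ _k : ZMod n, ∑ e ∈ Mstar, w e :=
            Finset.sum_le_sum fun k _ => hmax _ (key k)
        _ = (n : ℚ) * ∑ e ∈ Mstar, w e := by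
            rw [Finset.sum_const, Finset.card_univ, ZMod.card n, nsmul_eq_mul]
    have hnpos : (0 : ℚ) < (n : ℚ) := by
      exact_mod_cast Nat.pos_of_ne_zero h0
    rw [div_le_iff₀ hnpos]
    calc ∑ e ∈ E, w e ≤ (n : ℚ) * ∑ e ∈ Mstar, w e := hbound
      _ = (∑ e ∈ Mstar, w e) * n := by ring
end

section
/- The edge set of the complete graph K_{2m} on 2m vertices can be partitioned into 2m - 1 perfect matchings. -/
/-- A perfect matching of the complete graph on vertex set `V`: a set of
2-element edges, pairwise disjoint, covering every vertex. -/
def IsPerfectMatching {V : Type*} [Fintype V] [DecidableEq V]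
    (M : Finset (Finset V)) : Prop :=
  (∀ e ∈ M, e.card = 2) ∧ (∀ e ∈ M, ∀ f ∈ M, e ≠ f → Disjoint e f) ∧
    ∀ v : V, ∃ e ∈ M, v ∈ e

/-- Round-robin partner function: matching `i` pairs `∞` with `i` and
pairs `x` with `2i - x`. -/
def pmPartner (n : ℕ) (i : ZMod n) : Option (ZMod n) → Option (ZMod n)
  | none => some i
  | some x => if x = i then none else some (2 * i - x)

lemma matching_aux {V : Type*} [Fintype V] [DecidableEq V] (n : ℕ) (hn : Odd n)
    (E : V ≃ Option (ZMod n)) :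
    ∃ f : Fin n → Finset (Finset V),
      (∀ i, IsPerfectMatching (f i)) ∧
      ∀ e : Finset V, e.card = 2 → ∃! i, e ∈ f i := by
  obtain ⟨k, hk⟩ := hn
  haveI : NeZero n := ⟨by omega⟩
  have h2 : (2 : ZMod n) * ((k : ZMod n) + 1) = 1 := by
    have h := ZMod.natCast_self n
    have h' : ((n : ℕ) : ZMod n) = 2 * ((k : ZMod n) + 1) - 1 := by
      rw [hk]; push_cast; ring
    rw [h'] at h
    linear_combination h
  have hcancel : ∀ a b : ZMod n, 2 * a = 2 * b → a = b := by
    intro a b hab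
    linear_combination ((k : ZMod n) + 1) * hab - (a - b) * h2
  set p := pmPartner n with hp
  -- involution
  have hinv : ∀ (i : ZMod n) (w : Option (ZMod n)), p i (p i w) = w := by
    intro i w
    match w with
    | none => simp [hp, pmPartner]
    | some x =>
      by_cases hx : x = i
      · simp [hp, pmPartner, hx]
      · have hne2 : ¬ (2 * i - x = i) := by
          intro h; apply hx; linear_combination -h
        simp only [hp, pmPartner, if_neg hx, if_neg hne2]
        congr 1
        ring
  -- no fixed points
  have hnf : ∀ (i : ZMod n) (w : Option (ZMod n)), p i w ≠ w := by
    intro i w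
    match w with
    | none => simp [hp, pmPartner]
    | some x =>
      by_cases hx : x = i
      · simp [hp, pmPartner, hx]
      · simp only [hp, pmPartner, if_neg hx, ne_eq, Option.some_inj]
        intro h
        exact hx (hcancel x i (by linear_combination -h))
  -- the partner function on V
  set q : ZMod n → V → V := fun i v => E.symm (p i (E v)) with hq
  have hqinv : ∀ i v, q i (q i v) = v := by
    intro i v
    simp [hq, hinv]
  have hqnf : ∀ i v, q i v ≠ v := by
    intro i v h
    apply hnf i (E v)
    have := congrArg E h
    simpa [hq] using this
  -- the matchings
  refine ⟨fun i => Finset.univ.image (fun v => ({v, q (i : ZMod n) v} : Finset V)), ?_, ?_⟩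
  · -- each is a perfect matching
    intro i
    set c : ZMod n := (i : ZMod n)
    have hmem : ∀ e v, e ∈ Finset.univ.image (fun v => ({v, q c v} : Finset V)) →
        v ∈ e → e = {v, q c v} := by
      intro e v he hv
      obtain ⟨u, -, rfl⟩ := Finset.mem_image.mp he
      rcases Finset.mem_insert.mp hv with rfl | hv
      · rfl
      · rcases Finset.mem_singleton.mp hv with rfl
        rw [Finset.pair_comm, hqinv]
    refine ⟨?_, ?_, ?_⟩
    · intro e he
      obtain ⟨u, -, rfl⟩ := Finset.mem_image.mp he
      exact Finset.card_pair (Ne.symm (hqnf c u))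
    · intro e he f hf hef
      rw [Finset.disjoint_left]
      intro v hv hvf
      exact hef ((hmem e v he hv).trans (hmem f v hf hvf).symm)
    · intro v
      exact ⟨{v, q c v}, Finset.mem_image.mpr ⟨v, Finset.mem_univ v, rfl⟩,
        Finset.mem_insert_self v _⟩
  · -- uniqueness
    intro e he
    obtain ⟨a, b, hab, rfl⟩ := Finset.card_eq_two.mp he
    -- membership characterization
    have hchar : ∀ i : Fin n, ({a, b} : Finset V) ∈
        Finset.univ.image (fun v => ({v, q (i : ZMod n) v} : Finset V)) ↔
        p (i : ZMod n) (E a) = E b := by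
      intro i
      constructor
      · intro h
        obtain ⟨u, -, hu⟩ := Finset.mem_image.mp h
        have ha : a ∈ ({u, q (i : ZMod n) u} : Finset V) := by rw [hu]; simp
        have hb : b ∈ ({u, q (i : ZMod n) u} : Finset V) := by rw [hu]; simp
        have key : q (i : ZMod n) a = b := by
          rcases Finset.mem_insert.mp ha with rfl | ha'
          · rcases Finset.mem_insert.mp hb with rfl | hb'
            · exact absurd rfl hab
            · exact (Finset.mem_singleton.mp hb').symm
          · rcases Finset.mem_singleton.mp ha' with rfl
            rcases Finset.mem_insert.mp hb with rfl | hb'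
            · rw [hqinv]
            · exact absurd ((Finset.mem_singleton.mp hb').trans
                ((Finset.mem_singleton.mp ha')).symm).symm hab
        have := congrArg E key
        simpa [hq] using this
      · intro h
        refine Finset.mem_image.mpr ⟨a, Finset.mem_univ a, ?_⟩
        congr 1
        simp only [hq]
        rw [h, E.symm_apply_apply]
    -- unique c : ZMod n with p c (E a) = E b
    have hxy : E a ≠ E b := fun h => hab (E.injective h)
    have key : ∃! c : ZMod n, p c (E a) = E b := by
      match hEa : E a, hEb : E b with
      | none, none => exact absurd (hEa.trans hEb.symm) hxy
      | none, some y =>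
        exact ⟨y, by simp [hp, pmPartner], fun c hc => by simpa [hp, pmPartner] using hc⟩
      | some x, none =>
        refine ⟨x, by simp [hp, pmPartner], fun c hc => ?_⟩
        by_cases hxc : x = c
        · exact hxc.symm
        · simp [hp, pmPartner, hxc] at hc
      | some x, some y =>
        have hxy' : x ≠ y := fun h => hxy (by rw [hEa, hEb, h])
        have h2c : 2 * (((k : ZMod n) + 1) * (x + y)) = x + y := by
          linear_combination (x + y) * h2
        refine ⟨((k : ZMod n) + 1) * (x + y), ?_, ?_⟩
        · have hxc : x ≠ ((k : ZMod n) + 1) * (x + y) := fun h =>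
            hxy' (by linear_combination 2 * h + h2c)
          simp only [hp, pmPartner, if_neg hxc, Option.some_inj]
          linear_combination h2c
        · intro c hc
          by_cases hxc : x = c
          · simp [hp, pmPartner, hxc] at hc
          · simp only [hp, pmPartner, if_neg hxc, Option.some_inj] at hc
            apply hcancel
            linear_combination hc - h2c
    -- transfer uniqueness from ZMod n to Fin n
    obtain ⟨c, hc, hcu⟩ := key
    refine ⟨⟨c.val, c.val_lt⟩, ?_, ?_⟩
    · refine (hchar ⟨c.val, c.val_lt⟩).mpr ?_
      have hv : (((⟨c.val, c.val_lt⟩ : Fin n) : ℕ) : ZMod n) = c :=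
        ZMod.natCast_rightInverse c
      rw [hv]; exact hc
    · intro j hj
      have hj' := (hchar j).mp hj
      have hjc : ((j : ℕ) : ZMod n) = c := hcu _ hj'
      have hval : ((j : ℕ) : ZMod n).val = c.val := by rw [hjc]
      rw [ZMod.val_cast_of_lt j.isLt] at hval
      exact Fin.ext hval

/-- The edge set of `K_{2m}` can be partitioned into `2m - 1` perfect matchings. -/
theorem stmt_6 (m : ℕ) :
    ∃ f : Fin (2 * m - 1) → Finset (Finset (Fin (2 * m))),
      (∀ i, IsPerfectMatching (f i)) ∧
      ∀ e : Finset (Fin (2 * m)), e.card = 2 → ∃! i, e ∈ f i := by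
  rcases Nat.eq_zero_or_pos m with hm | hm
  · subst hm
    refine ⟨fun _ => ∅, fun i => i.elim0, fun e he => ?_⟩
    have h1 := Finset.card_le_univ e
    rw [he] at h1
    simp [Fintype.card_fin] at h1
  · obtain ⟨j, hj⟩ : ∃ j, 2 * m - 1 = j + 1 := ⟨2 * m - 2, by omega⟩
    rw [hj]
    have hn : Odd (j + 1) := by
      refine ⟨m - 1, by omega⟩
    have F : Fin (j + 1) ≃ ZMod (j + 1) := Equiv.refl _
    have E : Fin (2 * m) ≃ Option (ZMod (j + 1)) :=
      (finCongr (by omega : 2 * m = (j + 1) + 1)).trans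
        (finSuccEquivLast.trans (Equiv.optionCongr F))
    exact matching_aux (j + 1) hn E
end

section
/- Let G be a complete weighted graph on n agents, M* a maximum weight matching, π* a partition maximizing social welfare, and M any matching with 2·w(M) ≥ c · 2·w(M*) for some c ∈ [0,1]. Then SW(M) ≥ (c/n) · SW(π*), where SW(M) = 2·w(M). -/
/-- A partition of the agent set. -/
def IsPartition {N : Type*} [Fintype N] [DecidableEq N] (π : Finset (Finset N)) : Prop :=
  (∀ C ∈ π, ∀ D ∈ π, C ≠ D → Disjoint C D) ∧ ∀ i : N, ∃ C ∈ π, i ∈ C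

/-- Social welfare of a partition: twice the total weight of edges inside coalitions. -/
def SW {N : Type*} [DecidableEq N] (w : Finset N → ℚ) (π : Finset (Finset N)) : ℚ :=
  2 * ∑ C ∈ π, ∑ e ∈ Finset.powersetCard 2 C, w e

/-- Each fiber of the "sum of an injective coloring" map on a set of 2-element
edges is a matching. -/
lemma matching_of_fiber {N : Type*} [DecidableEq N] {n : ℕ}
    (φ : N → ZMod n) (hφ : Function.Injective φ) (S : Finset (Finset N))
    (hS : ∀ e ∈ S, e.card = 2) (z : ZMod n) :
    IsMatching (S.filter fun e => (∑ x ∈ e, φ x) = z) := by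
  constructor
  · intro e he; exact hS e (Finset.mem_filter.mp he).1
  · intro e he f hf hef
    rw [Finset.mem_filter] at he hf
    by_contra hd
    obtain ⟨x, hxe, hxf⟩ := Finset.not_disjoint_iff.mp hd
    have key : ∀ g : Finset N, g ∈ S → x ∈ g → (∑ y ∈ g, φ y) = z →
        ∃ a : N, g.erase x = {a} ∧ φ a = z - φ x := by
      intro g hg hxg hz
      have hcard : (g.erase x).card = 1 := by
        rw [Finset.card_erase_of_mem hxg, hS g hg]
      obtain ⟨a, ha⟩ := Finset.card_eq_one.mp hcard
      refine ⟨a, ha, ?_⟩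
      have := Finset.sum_erase_add g φ hxg
      rw [ha, Finset.sum_singleton, hz] at this
      linear_combination (this : φ a + φ x = z)
    obtain ⟨a, hae, haz⟩ := key e he.1 hxe he.2
    obtain ⟨b, hbf, hbz⟩ := key f hf.1 hxf hf.2
    have hab : a = b := hφ (by rw [haz, hbz])
    apply hef
    rw [← Finset.insert_erase hxe, ← Finset.insert_erase hxf, hae, hbf, hab]

theorem stmt_8 {N : Type*} [Fintype N] [DecidableEq N] (w : Finset N → ℚ) (c : ℚ)
    (hc0 : 0 ≤ c) (hc1 : c ≤ 1)
    (Mstar : Finset (Finset N)) (hMstar : IsMatching Mstar)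
    (hMstarMax : ∀ M : Finset (Finset N), IsMatching M → ∑ e ∈ M, w e ≤ ∑ e ∈ Mstar, w e)
    (πstar : Finset (Finset N)) (hπstar : IsPartition πstar)
    (hπstarMax : ∀ π : Finset (Finset N), IsPartition π → SW w π ≤ SW w πstar)
    (M : Finset (Finset N)) (hM : IsMatching M)
    (hMc : c * (2 * ∑ e ∈ Mstar, w e) ≤ 2 * ∑ e ∈ M, w e) :
    (c / (Fintype.card N : ℚ)) * SW w πstar ≤ 2 * ∑ e ∈ M, w e := by
  set n := Fintype.card N with hn
  rcases Nat.eq_zero_or_pos n with h0 | hpos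
  · -- no agents: M is empty and the LHS is zero
    haveI : IsEmpty N := Fintype.card_eq_zero_iff.mp h0
    have hMempty : M = ∅ := by
      rw [Finset.eq_empty_iff_forall_notMem]
      intro e he
      have : e.card = 2 := hM.1 e he
      have : e.Nonempty := Finset.card_pos.mp (by omega)
      exact IsEmpty.false this.choose
    rw [hMempty, h0]
    simp
  · haveI : NeZero n := ⟨hpos.ne'⟩
    -- injective coloring of agents by ZMod n
    set φ : N → ZMod n := fun a => ((Fintype.equivFin N a : ℕ) : ZMod n) with hφdef
    have hφ : Function.Injective φ := by
      intro a b h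
      apply (Fintype.equivFin N).injective
      apply Fin.ext
      have := congrArg ZMod.val h
      rwa [ZMod.val_natCast_of_lt (Fin.is_lt _), ZMod.val_natCast_of_lt (Fin.is_lt _)] at this
    -- the set of positive-weight edges
    set Ep : Finset (Finset N) :=
      (Finset.powersetCard 2 (Finset.univ : Finset N)).filter fun e => 0 < w e with hEp
    -- Step 1: SW(π*) ≤ 2 w(E+)
    have step1 : SW w πstar ≤ 2 * ∑ e ∈ Ep, w e := by
      unfold SW
      have hdisj : (↑πstar : Set (Finset N)).PairwiseDisjoint
          (fun C => Finset.powersetCard 2 C) := by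
        intro C hC D hD hCD
        simp only [Function.onFun]
        rw [Finset.disjoint_left]
        intro e heC heD
        rw [Finset.mem_powersetCard] at heC heD
        have hdis := hπstar.1 C hC D hD hCD
        have : e = ∅ := by
          rw [← Finset.subset_empty]
          intro x hx
          exact absurd (Finset.disjoint_left.mp hdis (heC.1 hx) (heD.1 hx)) (by simp)
        rw [this] at heC
        simp at heC
      rw [← Finset.sum_biUnion hdisj]
      set B := πstar.biUnion fun C => Finset.powersetCard 2 C with hB
      have h1 : ∑ e ∈ B, w e ≤ ∑ e ∈ B.filter fun e => 0 < w e, w e := by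
        rw [← Finset.sum_filter_add_sum_filter_not B (fun e => 0 < w e) w]
        have : ∑ e ∈ B.filter fun e => ¬ 0 < w e, w e ≤ 0 := by
          apply Finset.sum_nonpos
          intro e he
          exact le_of_not_gt (Finset.mem_filter.mp he).2
        linarith
      have h2 : (B.filter fun e => 0 < w e) ⊆ Ep := by
        intro e he
        rw [Finset.mem_filter] at he
        obtain ⟨heB, hepos⟩ := he
        rw [Finset.mem_biUnion] at heB
        obtain ⟨C, _, heC⟩ := heB
        rw [Finset.mem_powersetCard] at heC
        rw [hEp, Finset.mem_filter, Finset.mem_powersetCard]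
        exact ⟨⟨Finset.subset_univ e, heC.2⟩, hepos⟩
      have h3 : ∑ e ∈ B.filter (fun e => 0 < w e), w e ≤ ∑ e ∈ Ep, w e := by
        apply Finset.sum_le_sum_of_subset_of_nonneg h2
        intro e he _
        exact le_of_lt (Finset.mem_filter.mp he).2
      linarith
    -- Step 2: w(E+) ≤ n w(M*)
    have step2 : ∑ e ∈ Ep, w e ≤ (n : ℚ) * ∑ e ∈ Mstar, w e := by
      have hcard2 : ∀ e ∈ Ep, e.card = 2 := by
        intro e he
        rw [hEp, Finset.mem_filter, Finset.mem_powersetCard] at he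
        exact he.1.2
      calc ∑ e ∈ Ep, w e
          = ∑ z : ZMod n, ∑ e ∈ Ep.filter fun e => (∑ x ∈ e, φ x) = z, w e :=
            (Finset.sum_fiberwise Ep (fun e => ∑ x ∈ e, φ x) w).symm
        _ ≤ ∑ _z : ZMod n, ∑ e ∈ Mstar, w e := by
            apply Finset.sum_le_sum
            intro z _
            exact hMstarMax _ (matching_of_fiber φ hφ Ep hcard2 z)
        _ = (n : ℚ) * ∑ e ∈ Mstar, w e := by
            rw [Finset.sum_const, Finset.card_univ, ZMod.card, nsmul_eq_mul]
    -- combine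
    have hnq : (0 : ℚ) < (n : ℚ) := by exact_mod_cast hpos
    have hcn : 0 ≤ c / (n : ℚ) := div_nonneg hc0 hnq.le
    have key : (c / (n : ℚ)) * SW w πstar ≤ c * (2 * ∑ e ∈ Mstar, w e) := by
      calc (c / (n : ℚ)) * SW w πstar
          ≤ (c / (n : ℚ)) * (2 * ∑ e ∈ Ep, w e) := by
            apply mul_le_mul_of_nonneg_left step1 hcn
        _ ≤ (c / (n : ℚ)) * (2 * ((n : ℚ) * ∑ e ∈ Mstar, w e)) := by
            apply mul_le_mul_of_nonneg_left (by linarith) hcn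
        _ = c * (2 * ∑ e ∈ Mstar, w e) := by
            field_simp
    linarith
end

section
/- Under a uniformly random permutation σ of n ≥ 2 distinct elements containing two fixed distinguished elements a and b, the probability that a arrives before b and all elements arriving strictly before b other than a belong to a fixed set Y disjoint from {a,b}, can be written as ∑_{i=0}^{|Y|} [C(|Y|,i)/C(n-2,i)] · [(i+1)/(n-1)] · [1/n], summing over the number i of elements preceding b other than a; when n = 2k+2 and |Y| = k with the complement of Y ∪ {a,b} also of size k, this sum equals 1/(k^2 + 3k + 2). -/
lemma part2 (k : ℕ) :
    ∑ i ∈ Finset.range (k + 1),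
        ((k.choose i : ℚ) / ((2 * k).choose i : ℚ))
          * (((i : ℚ) + 1) / (2 * (k : ℚ) + 1)) * (1 / (2 * (k : ℚ) + 2))
      = 1 / ((k : ℚ) ^ 2 + 3 * (k : ℚ) + 2) := by
  rcases Nat.eq_zero_or_pos k with hk | hk
  · subst hk; norm_num
  have hk1 : (1:ℕ) ≤ k := hk
  set f : ℕ → ℚ := fun i =>
    (((i:ℚ)^2 - (2*(k:ℚ)-1)*(i:ℚ) - (4*(k:ℚ)+2)) * (Nat.descFactorial k i : ℚ)
      * ((2*k - i).factorial : ℚ)) with hf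
  have hD : (((k:ℚ)+2) * ((2*k).factorial : ℚ) * (2*(k:ℚ)+1) * (2*(k:ℚ)+2)) ≠ 0 := by
    have : ((2*k).factorial : ℚ) ≠ 0 := by
      exact_mod_cast (Nat.factorial_pos (2*k)).ne'
    positivity
  have key : ∀ i ∈ Finset.range (k+1),
      ((k.choose i : ℚ) / ((2 * k).choose i : ℚ))
          * (((i : ℚ) + 1) / (2 * (k : ℚ) + 1)) * (1 / (2 * (k : ℚ) + 2))
        = (f (i+1) - f i) / (((k:ℚ)+2) * ((2*k).factorial : ℚ) * (2*(k:ℚ)+1) * (2*(k:ℚ)+2)) := by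
    intro i hi
    have hik : i ≤ k := Nat.lt_succ_iff.mp (Finset.mem_range.mp hi)
    have hi2k : i + 1 ≤ 2 * k := by omega
    have hC : (((2*k).choose i : ℚ)) * (i.factorial : ℚ) * ((2*k - i).factorial : ℚ)
        = ((2*k).factorial : ℚ) := by
      exact_mod_cast Nat.choose_mul_factorial_mul_factorial (by omega : i ≤ 2*k)
    have hd : (Nat.descFactorial k i : ℚ) = (i.factorial : ℚ) * (k.choose i : ℚ) := by
      exact_mod_cast Nat.descFactorial_eq_factorial_mul_choose k i
    have hd1 : (Nat.descFactorial k (i+1) : ℚ) = ((k:ℚ) - (i:ℚ)) * (Nat.descFactorial k i : ℚ) := by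
      rw [Nat.descFactorial_succ]
      push_cast [Nat.cast_sub hik]
      ring
    have hsub : 2*k - i = (2*k - (i+1)) + 1 := by omega
    have hF : ((2*k - i).factorial : ℚ) = (2*(k:ℚ) - (i:ℚ)) * ((2*k - (i+1)).factorial : ℚ) := by
      rw [hsub, Nat.factorial_succ]
      have : ((2*k - (i+1) : ℕ) : ℚ) = 2*(k:ℚ) - (i:ℚ) - 1 := by
        push_cast [Nat.cast_sub hi2k]; ring
      push_cast [this]
      ring
    have hdiff : f (i+1) - f i
        = ((k:ℚ)+2) * ((i:ℚ)+1) * (Nat.descFactorial k i : ℚ) * ((2*k - i).factorial : ℚ) := by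
      simp only [hf]
      rw [hd1]
      rw [hF]
      push_cast
      ring
    rw [eq_div_iff hD, hdiff, hd, ← hC]
    have hC2 : ((2*k).choose i : ℚ) ≠ 0 := by
      exact_mod_cast (Nat.choose_pos (by omega : i ≤ 2*k)).ne'
    have h1 : (2*(k:ℚ)+1) ≠ 0 := by positivity
    have h2 : (2*(k:ℚ)+2) ≠ 0 := by positivity
    field_simp
  rw [Finset.sum_congr rfl key, ← Finset.sum_div, Finset.sum_range_sub]
  have hfk1 : f (k+1) = 0 := by
    simp [hf, Nat.descFactorial_of_lt (Nat.lt_succ_self k)]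
  have hf0 : f 0 = -(4*(k:ℚ)+2) * ((2*k).factorial : ℚ) := by
    simp [hf]
  rw [hfk1, hf0]
  have hfac : ((2*k).factorial : ℚ) ≠ 0 := by
    exact_mod_cast (Nat.factorial_pos (2*k)).ne'
  have h3 : ((k:ℚ)^2 + 3*(k:ℚ) + 2) ≠ 0 := by positivity
  field_simp
  ring


lemma fiber_count {N : Type*} [Fintype N] [DecidableEq N] {n : ℕ}
    (hcard : Fintype.card N = n) (b : N) (T : Finset N) (hbT : b ∉ T) :
    Fintype.card {σ : Fin n ≃ N //
        ∀ x : N, ((σ.symm x : ℕ) < (σ.symm b : ℕ) ↔ x ∈ T)}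
      = T.card.factorial * (n - 1 - T.card).factorial := by
  classical
  set j := T.card with hj
  set r := n - 1 - j with hr
  set R : Finset N := Finset.univ \ insert b T with hR
  have hmemR : ∀ x : N, x ∈ R ↔ (x ≠ b ∧ x ∉ T) := by
    intro x; rw [hR]; simp [not_or]
  have hjn : j + 1 ≤ n := by
    have := Finset.card_le_univ (insert b T)
    rw [Finset.card_insert_of_notMem hbT, hcard] at this
    omega
  have hRcard : R.card = r := by
    rw [hR, Finset.card_sdiff_of_subset (Finset.subset_univ _), Finset.card_univ, hcard,
      Finset.card_insert_of_notMem hbT]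
    omega
  have hbpos : ∀ (σ : Fin n ≃ N),
      (∀ x : N, ((σ.symm x : ℕ) < (σ.symm b : ℕ) ↔ x ∈ T)) → (σ.symm b : ℕ) = j := by
    intro σ hσ
    have himg : Finset.image σ (Finset.Iio (σ.symm b)) = T := by
      ext x
      constructor
      · rintro hx
        obtain ⟨p, hp, rfl⟩ := Finset.mem_image.mp hx
        rw [Finset.mem_Iio] at hp
        exact (hσ (σ p)).mp (by rw [Equiv.symm_apply_apply]; exact hp)
      · intro hx
        exact Finset.mem_image.mpr ⟨σ.symm x, Finset.mem_Iio.mpr ((hσ x).mpr hx),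
          Equiv.apply_symm_apply σ x⟩
    calc (σ.symm b : ℕ) = (Finset.Iio (σ.symm b)).card := (Fin.card_Iio _).symm
      _ = (Finset.image σ (Finset.Iio (σ.symm b))).card :=
          (Finset.card_image_of_injective _ σ.injective).symm
      _ = T.card := by rw [himg]
  set St := {σ : Fin n ≃ N // ∀ x : N, ((σ.symm x : ℕ) < (σ.symm b : ℕ) ↔ x ∈ T)} with hSt
  have memT : ∀ (σ : St) (p : ℕ) (hp : p < j), σ.1 ⟨p, by omega⟩ ∈ T := by
    intro σ p hp
    apply (σ.2 _).mp
    rw [Equiv.symm_apply_apply, hbpos σ.1 σ.2]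
    exact hp
  have memR : ∀ (σ : St) (q : ℕ) (hq : q < r), σ.1 ⟨j + 1 + q, by omega⟩ ∈ R := by
    intro σ q hq
    rw [hmemR]
    constructor
    · intro hbeq
      have h2 : σ.1.symm b = ⟨j + 1 + q, by omega⟩ := (Equiv.symm_apply_eq _).mpr hbeq.symm
      have h3 := congrArg Fin.val h2
      rw [hbpos σ.1 σ.2] at h3
      simp only [Fin.val_mk] at h3
      omega
    · intro hmem
      have h4 := (σ.2 _).mpr hmem
      rw [Equiv.symm_apply_apply, hbpos σ.1 σ.2] at h4
      simp only [Fin.val_mk] at h4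
      omega
  let Φ : St → (Fin j ↪ {x // x ∈ T}) × (Fin r ↪ {x // x ∈ R}) := fun σ =>
    (⟨fun p => ⟨σ.1 ⟨p.1, by omega⟩, memT σ p.1 p.2⟩, by
        intro p q h
        have h2 : σ.1 ⟨p.1, by omega⟩ = σ.1 ⟨q.1, by omega⟩ := congrArg Subtype.val h
        have h3 := congrArg Fin.val (σ.1.injective h2)
        simp only [] at h3
        exact Fin.ext h3⟩,
     ⟨fun q => ⟨σ.1 ⟨j + 1 + q.1, by omega⟩, memR σ q.1 q.2⟩, by
        intro p q h
        have h2 : σ.1 ⟨j+1+p.1, by omega⟩ = σ.1 ⟨j+1+q.1, by omega⟩ := congrArg Subtype.val h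
        have h3 := congrArg Fin.val (σ.1.injective h2)
        simp only [] at h3
        exact Fin.ext (by omega)⟩)
  have hΦinj : Function.Injective Φ := by
    intro σ τ h
    have h1 : (Φ σ).1 = (Φ τ).1 := congrArg Prod.fst h
    have h2 : (Φ σ).2 = (Φ τ).2 := congrArg Prod.snd h
    have hb1 : σ.1 ⟨j, by omega⟩ = b := by
      have h5 : σ.1.symm b = ⟨j, by omega⟩ := Fin.ext (hbpos σ.1 σ.2)
      rw [← h5, Equiv.apply_symm_apply]
    have hb2 : τ.1 ⟨j, by omega⟩ = b := by
      have h5 : τ.1.symm b = ⟨j, by omega⟩ := Fin.ext (hbpos τ.1 τ.2)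
      rw [← h5, Equiv.apply_symm_apply]
    apply Subtype.ext
    apply Equiv.ext
    intro p
    rcases lt_trichotomy (p : ℕ) j with hp | hp | hp
    · exact congrArg (fun e : Fin j ↪ {x // x ∈ T} => ((e ⟨p.1, hp⟩ : {x // x ∈ T}) : N)) h1
    · have hpp : p = ⟨j, by omega⟩ := Fin.ext hp
      rw [hpp, hb1, hb2]
    · have hq : p.1 - (j+1) < r := by omega
      have hpp : p = (⟨j + 1 + (p.1 - (j+1)), by omega⟩ : Fin n) :=
        Fin.ext (by show (p:ℕ) = j + 1 + ((p:ℕ) - (j+1)); omega)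
      rw [hpp]
      exact congrArg (fun e : Fin r ↪ {x // x ∈ R} => ((e ⟨p.1 - (j+1), hq⟩ : {x // x ∈ R}) : N)) h2
  have hΦsurj : Function.Surjective Φ := by
    rintro ⟨e₁, e₂⟩
    have hgpf : ∀ p : Fin n, ¬ (p:ℕ) < j → (p:ℕ) ≠ j → (p:ℕ) - (j+1) < r := by
      intro p h1 h2
      have := p.2
      omega
    let g : Fin n → N := fun p =>
      if h : (p : ℕ) < j then (e₁ ⟨p.1, h⟩ : N)
      else if h2 : (p : ℕ) = j then b
      else (e₂ ⟨(p : ℕ) - (j+1), hgpf p h h2⟩ : N)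
    have hglt : ∀ (p : Fin n) (h : (p:ℕ) < j), g p = (e₁ ⟨p.1, h⟩ : N) := by
      intro p h; simp only [g]; rw [dif_pos h]
    have hgeq : ∀ (p : Fin n) (h : (p:ℕ) = j), g p = b := by
      intro p h; simp only [g]; rw [dif_neg (by omega), dif_pos h]
    have hggt : ∀ (p : Fin n) (h : j < (p:ℕ)),
        g p = (e₂ ⟨p.1 - (j+1), hgpf p (by omega) (by omega)⟩ : N) := by
      intro p h; simp only [g]; rw [dif_neg (by omega), dif_neg (by omega)]
    have he₁T : ∀ p, (e₁ p : N) ∈ T := fun p => (e₁ p).2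
    have he₂R : ∀ q, (e₂ q : N) ∈ R := fun q => (e₂ q).2
    have he₂b : ∀ q, (e₂ q : N) ≠ b := fun q => ((hmemR _).mp (he₂R q)).1
    have he₂T : ∀ q, (e₂ q : N) ∉ T := fun q => ((hmemR _).mp (he₂R q)).2
    have hginj : Function.Injective g := by
      intro p q h
      apply Fin.ext
      rcases lt_trichotomy (p : ℕ) j with hp | hp | hp <;>
        rcases lt_trichotomy (q : ℕ) j with hq | hq | hq
      · rw [hglt p hp, hglt q hq] at h
        have h3 := congrArg Fin.val (e₁.injective (Subtype.ext h))
        simpa using h3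
      · rw [hglt p hp, hgeq q hq] at h
        exact absurd (h ▸ he₁T ⟨p.1, hp⟩) hbT
      · rw [hglt p hp, hggt q hq] at h
        exact absurd (h ▸ he₁T ⟨p.1, hp⟩) (he₂T _)
      · rw [hgeq p hp, hglt q hq] at h
        exact absurd (h.symm ▸ he₁T ⟨q.1, hq⟩) hbT
      · omega
      · rw [hgeq p hp, hggt q hq] at h
        exact absurd h.symm (he₂b _)
      · rw [hggt p hp, hglt q hq] at h
        exact absurd (h.symm ▸ he₁T ⟨q.1, hq⟩) (he₂T _)
      · rw [hggt p hp, hgeq q hq] at h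
        exact absurd h (he₂b _)
      · rw [hggt p hp, hggt q hq] at h
        have h3 := congrArg Fin.val (e₂.injective (Subtype.ext h))
        simp only [] at h3
        omega
    have hcard' : Fintype.card (Fin n) = Fintype.card N := by simp [hcard]
    have hgbij : Function.Bijective g :=
      (Fintype.bijective_iff_injective_and_card g).mpr ⟨hginj, hcard'⟩
    let σ₀ : Fin n ≃ N := Equiv.ofBijective g hgbij
    have hσ₀app : ∀ p : Fin n, σ₀ p = g p := fun p => rfl
    have hb0 : σ₀ ⟨j, by omega⟩ = b := by
      rw [hσ₀app]
      exact hgeq _ rfl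
    have hsymmb : (σ₀.symm b : ℕ) = j := by
      rw [← hb0, Equiv.symm_apply_apply]
    have hcond : ∀ x : N, ((σ₀.symm x : ℕ) < (σ₀.symm b : ℕ) ↔ x ∈ T) := by
      intro x
      rw [hsymmb]
      have hx2 : x = g (σ₀.symm x) := (Equiv.apply_symm_apply σ₀ x).symm
      constructor
      · intro hx
        rw [hglt _ hx] at hx2
        rw [hx2]
        exact he₁T _
      · intro hx
        by_contra hlt
        by_cases h2 : (σ₀.symm x : ℕ) = j
        · rw [hgeq _ h2] at hx2
          rw [hx2] at hx
          exact hbT hx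
        · rw [hggt _ (by omega)] at hx2
          rw [hx2] at hx
          exact he₂T _ hx
    refine ⟨⟨σ₀, hcond⟩, ?_⟩
    have hΦval : Φ ⟨σ₀, hcond⟩ = (e₁, e₂) := by
      apply Prod.ext
      · apply Function.Embedding.ext
        intro p
        apply Subtype.ext
        show σ₀ ⟨p.1, _⟩ = (e₁ p : N)
        rw [hσ₀app, hglt _ p.2]
      · apply Function.Embedding.ext
        intro q
        apply Subtype.ext
        show σ₀ ⟨j + 1 + q.1, _⟩ = (e₂ q : N)
        rw [hσ₀app, hggt _ (by omega : j < j + 1 + q.1)]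
        congr 1
        apply congrArg
        apply Fin.ext
        show j + 1 + (q:ℕ) - (j+1) = (q:ℕ)
        omega
    exact hΦval
  have hcards : Fintype.card St
      = Fintype.card ((Fin j ↪ {x // x ∈ T}) × (Fin r ↪ {x // x ∈ R})) :=
    Fintype.card_of_bijective ⟨hΦinj, hΦsurj⟩
  rw [hcards, Fintype.card_prod, Fintype.card_embedding_eq, Fintype.card_embedding_eq]
  simp only [Fintype.card_coe, Fintype.card_fin, hRcard]
  rw [← hj, Nat.descFactorial_self, Nat.descFactorial_self]

lemma count_main {N : Type*} [Fintype N] [DecidableEq N] (k : ℕ)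
    (hcard : Fintype.card N = 2 * k + 2)
    (a b : N) (hab : a ≠ b) (Y : Finset N) (hYcard : Y.card = k)
    (haY : a ∉ Y) (hbY : b ∉ Y) :
    Nat.card {σ : Fin (2 * k + 2) ≃ N //
        (σ.symm a : ℕ) < (σ.symm b : ℕ) ∧
          ∀ x : N, (σ.symm x : ℕ) < (σ.symm b : ℕ) → x = a ∨ x ∈ Y}
      = ∑ i ∈ Finset.range (k + 1),
          k.choose i * ((i+1).factorial * (2*k - i).factorial) := by
  classical
  rw [Nat.card_eq_fintype_card, Fintype.card_subtype]
  set n := 2*k+2 with hn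
  set F : (Fin n ≃ N) → Finset N := fun σ =>
    Finset.univ.filter (fun x => (σ.symm x : ℕ) < (σ.symm b : ℕ)) with hF
  set A : Finset (Fin n ≃ N) := Finset.univ.filter (fun σ =>
    (σ.symm a : ℕ) < (σ.symm b : ℕ) ∧
      ∀ x : N, (σ.symm x : ℕ) < (σ.symm b : ℕ) → x = a ∨ x ∈ Y) with hA
  show A.card = _
  have hFB : ∀ σ ∈ A, F σ ∈ Y.powerset.image (insert a) := by
    intro σ hσ
    rw [hA, Finset.mem_filter] at hσ
    obtain ⟨-, h1, h2⟩ := hσ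
    refine Finset.mem_image.mpr ⟨(F σ).erase a, Finset.mem_powerset.mpr ?_, ?_⟩
    · intro x hx
      rw [Finset.mem_erase] at hx
      obtain ⟨hxa, hxF⟩ := hx
      rw [hF, Finset.mem_filter] at hxF
      rcases h2 x hxF.2 with h | h
      · exact absurd h hxa
      · exact h
    · apply Finset.insert_erase
      rw [hF, Finset.mem_filter]
      exact ⟨Finset.mem_univ a, h1⟩
  rw [Finset.card_eq_sum_card_fiberwise hFB]
  have hins : ∀ S ∈ Y.powerset, ∀ S' ∈ Y.powerset, insert a S = insert a S' → S = S' := by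
    intro S hS S' hS' h
    have haS : a ∉ S := fun h' => haY (Finset.mem_powerset.mp hS h')
    have haS' : a ∉ S' := fun h' => haY (Finset.mem_powerset.mp hS' h')
    rw [← Finset.erase_insert haS, ← Finset.erase_insert haS', h]
  rw [Finset.sum_image hins]
  have key : ∀ S ∈ Y.powerset, (A.filter (fun σ => F σ = insert a S)).card
      = (S.card + 1).factorial * (2*k - S.card).factorial := by
    intro S hS
    rw [Finset.mem_powerset] at hS
    have haS : a ∉ S := fun h => haY (hS h)
    have hbS : b ∉ S := fun h => hbY (hS h)
    have hbT : b ∉ insert a S := by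
      rw [Finset.mem_insert]
      rintro (h | h)
      · exact hab h.symm
      · exact hbS h
    have hTcard : (insert a S).card = S.card + 1 := Finset.card_insert_of_notMem haS
    have hfilter : A.filter (fun σ => F σ = insert a S)
        = Finset.univ.filter (fun σ : Fin n ≃ N =>
            ∀ x : N, ((σ.symm x : ℕ) < (σ.symm b : ℕ) ↔ x ∈ insert a S)) := by
      ext σ
      simp only [hA, Finset.mem_filter, Finset.mem_univ, true_and]
      constructor
      · rintro ⟨⟨h1, h2⟩, h3⟩
        intro x
        rw [← h3, hF, Finset.mem_filter]
        simp only [Finset.mem_univ, true_and]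
      · intro hC
        refine ⟨⟨(hC a).mpr (Finset.mem_insert_self a S), fun x hx => ?_⟩, ?_⟩
        · rcases Finset.mem_insert.mp ((hC x).mp hx) with h | h
          · exact Or.inl h
          · exact Or.inr (hS h)
        · ext x
          rw [hF, Finset.mem_filter]
          simp only [Finset.mem_univ, true_and]
          exact hC x
    rw [hfilter, ← Fintype.card_subtype, fiber_count hcard b (insert a S) hbT, hTcard]
    congr 1
    congr 1
    omega
  rw [Finset.sum_congr rfl key, Finset.sum_powerset, hYcard]
  apply Finset.sum_congr rfl
  intro i hi
  have hconst : ∀ S ∈ Finset.powersetCard i Y,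
      (S.card + 1).factorial * (2*k - S.card).factorial
        = (i+1).factorial * (2*k - i).factorial := by
    intro S hS
    rw [(Finset.mem_powersetCard.mp hS).2]
  rw [Finset.sum_congr rfl hconst, Finset.sum_const, Finset.card_powersetCard, hYcard,
    smul_eq_mul]


theorem stmt_9 {N : Type*} [Fintype N] [DecidableEq N] (k : ℕ)
    (hcard : Fintype.card N = 2 * k + 2)
    (a b : N) (hab : a ≠ b) (Y : Finset N) (hYcard : Y.card = k)
    (haY : a ∉ Y) (hbY : b ∉ Y) :
    ((Nat.card {σ : Fin (2 * k + 2) ≃ N //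
          (σ.symm a : ℕ) < (σ.symm b : ℕ) ∧
            ∀ x : N, (σ.symm x : ℕ) < (σ.symm b : ℕ) → x = a ∨ x ∈ Y} : ℚ)
        / (Nat.card (Fin (2 * k + 2) ≃ N) : ℚ)
      = ∑ i ∈ Finset.range (k + 1),
          ((k.choose i : ℚ) / ((2 * k).choose i : ℚ))
            * (((i : ℚ) + 1) / (2 * (k : ℚ) + 1)) * (1 / (2 * (k : ℚ) + 2)))
    ∧ ∑ i ∈ Finset.range (k + 1),
          ((k.choose i : ℚ) / ((2 * k).choose i : ℚ))
            * (((i : ℚ) + 1) / (2 * (k : ℚ) + 1)) * (1 / (2 * (k : ℚ) + 2))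
        = 1 / ((k : ℚ) ^ 2 + 3 * (k : ℚ) + 2) := by
  refine ⟨?_, part2 k⟩
  have hnum := count_main k hcard a b hab Y hYcard haY hbY
  have hden : Nat.card (Fin (2 * k + 2) ≃ N) = (2 * k + 2).factorial := by
    rw [Nat.card_eq_fintype_card,
      Fintype.card_equiv (Fintype.equivFinOfCardEq hcard).symm, Fintype.card_fin]
  rw [hnum, hden, Nat.cast_sum, Finset.sum_div]
  apply Finset.sum_congr rfl
  intro i hi
  have hik : i ≤ k := Nat.lt_succ_iff.mp (Finset.mem_range.mp hi)
  have hA : (((2 * k).choose i : ℚ)) * (i.factorial : ℚ) * ((2 * k - i).factorial : ℚ)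
      = ((2 * k).factorial : ℚ) := by
    exact_mod_cast Nat.choose_mul_factorial_mul_factorial (by omega : i ≤ 2 * k)
  have hf1 : ((i + 1).factorial : ℚ) = ((i : ℚ) + 1) * (i.factorial : ℚ) := by
    rw [Nat.factorial_succ]; push_cast; ring
  have hf2 : ((2 * k + 2).factorial : ℚ)
      = (2 * (k : ℚ) + 2) * (2 * (k : ℚ) + 1) * ((2 * k).factorial : ℚ) := by
    have h : (2 * k + 2).factorial = (2 * k + 2) * ((2 * k + 1) * (2 * k).factorial) := by
      rw [show 2 * k + 2 = (2 * k + 1) + 1 from rfl, Nat.factorial_succ, Nat.factorial_succ]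
    rw [h]; push_cast; ring
  have hC2 : ((2 * k).choose i : ℚ) ≠ 0 := by
    exact_mod_cast (Nat.choose_pos (by omega : i ≤ 2 * k)).ne'
  have hfi : (i.factorial : ℚ) ≠ 0 := by exact_mod_cast i.factorial_pos.ne'
  have hfF : ((2 * k - i).factorial : ℚ) ≠ 0 := by
    exact_mod_cast (2 * k - i).factorial_pos.ne'
  have h1 : (2 * (k : ℚ) + 1) ≠ 0 := by positivity
  have h2 : (2 * (k : ℚ) + 2) ≠ 0 := by positivity
  push_cast
  rw [hf2, hf1, ← hA]
  field_simp
end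

section
/- For every positive integer k, 2 · ∑_{i=0}^{k} [C(k,i)/C(2k,i)] · (i+1)/(2k+1) · 1/(2k+2) = 2/(k^2 + 3k + 2). -/
/-!
Write `r i = C(n,i) / C(m,i)`. The identity `C(n,i+1) (i+1) = C(n,i) (n-i)` gives the recurrence
`(m - i) r (i+1) = (n - i) r i`, which makes `(i+1) r i` Gosper-summable: it is the difference
`f i - f (i+1)` for `f i = (m+1-i) ((m+1-n) i + m+2) r i / ((m+1-n)(m+2-n))`. Telescoping gives
`∑_{i ≤ n} (i+1) r i = (m+1)(m+2) / ((m+1-n)(m+2-n))`, and with `m = 2n` the theorem is this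
identity divided by `(2n+1)(2n+2)`.
-/

open Finset

theorem Nat.cast_choose_succ_mul {R : Type*} [CommRing R] (n i : ℕ) :
    (n.choose (i + 1) : R) * (i + 1) = n.choose i * (n - i) := by
  rcases le_or_gt i n with hi | hi
  · have h := congrArg (Nat.cast (R := R)) (Nat.choose_succ_right_eq n i)
    push_cast [Nat.cast_sub hi] at h
    exact h
  · simp [Nat.choose_eq_zero_of_lt hi, Nat.choose_eq_zero_of_lt (Nat.lt_succ_of_lt hi)]

section ChooseRatio

variable {K : Type*} [Field K] [CharZero K]

theorem sub_mul_choose_div_choose_succ {n m i : ℕ} (h : i < m) :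
    ((m : K) - i) * (n.choose (i + 1) / m.choose (i + 1)) =
      ((n : K) - i) * (n.choose i / m.choose i) := by
  have hm : (m.choose i : K) ≠ 0 := by exact_mod_cast (Nat.choose_pos h.le).ne'
  have hm' : (m.choose (i + 1) : K) ≠ 0 := by exact_mod_cast (Nat.choose_pos h).ne'
  have hi : (i : K) + 1 ≠ 0 := by exact_mod_cast Nat.succ_ne_zero i
  rw [mul_div_assoc', mul_div_assoc', div_eq_div_iff hm' hm, ← mul_left_inj' hi]
  linear_combination (m.choose i * ((m : K) - i)) * Nat.cast_choose_succ_mul (R := K) n i -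
    (n.choose i * ((n : K) - i)) * Nat.cast_choose_succ_mul (R := K) m i

theorem sum_range_succ_mul_choose_div_choose {n m : ℕ} (h : n < m) :
    ∑ i ∈ range (n + 1), ((i : K) + 1) * (n.choose i / m.choose i) =
      (m + 1) * (m + 2) / ((m + 1 - n) * (m + 2 - n)) := by
  have hd : ((m : K) + 1 - n) * (m + 2 - n) ≠ 0 := by
    refine mul_ne_zero ?_ ?_ <;> rw [sub_ne_zero] <;> norm_cast <;> omega
  set r : ℕ → K := fun i => n.choose i / m.choose i
  set f : ℕ → K := fun i => (m + 1 - i) * ((m + 1 - n) * i + m + 2) * r i /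
    ((m + 1 - n) * (m + 2 - n))
  have hstep : ∀ i ∈ range (n + 1), ((i : K) + 1) * r i = f i - f (i + 1) := by
    intro i hi
    have hrec : ((m : K) - i) * r (i + 1) = (n - i) * r i :=
      sub_mul_choose_div_choose_succ (lt_of_lt_of_le (mem_range.mp hi) h)
    rw [← sub_div, eq_div_iff hd]
    push_cast
    linear_combination (((m : K) + 1 - n) * (i + 1) + m + 2) * hrec
  rw [sum_congr rfl hstep, sum_range_sub']
  simp [f, r]

end ChooseRatio

theorem stmt_10 (k : ℕ) (hk : 1 ≤ k) :
    2 * ∑ i ∈ Finset.range (k + 1),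
        ((k.choose i : ℚ) / ((2 * k).choose i : ℚ))
          * (((i : ℚ) + 1) / (2 * (k : ℚ) + 1)) * (1 / (2 * (k : ℚ) + 2))
      = 2 / ((k : ℚ) ^ 2 + 3 * (k : ℚ) + 2) := by
  have hsum := sum_range_succ_mul_choose_div_choose (K := ℚ) (n := k) (m := 2 * k) (by omega)
  have hfactor : 2 * ∑ i ∈ range (k + 1),
      ((k.choose i : ℚ) / ((2 * k).choose i : ℚ))
        * (((i : ℚ) + 1) / (2 * (k : ℚ) + 1)) * (1 / (2 * (k : ℚ) + 2)) =
      2 / ((2 * k + 1) * (2 * k + 2)) *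
        ∑ i ∈ range (k + 1), ((i : ℚ) + 1) * (k.choose i / (2 * k).choose i) := by
    rw [mul_sum, mul_sum]
    refine sum_congr rfl fun i _ => ?_
    field_simp
  rw [hfactor, hsum]
  push_cast
  rw [show 2 * (k : ℚ) + 1 - k = k + 1 by ring, show 2 * (k : ℚ) + 2 - k = k + 2 by ring]
  field_simp
  ring
end

section
/- Let σ be a uniformly random permutation of n elements and, for 2 ≤ k ≤ n, let J_k be the event that the maximum of a fixed injective weight function over pairs among the first k arrived elements is attained at a pair containing the k-th arriving element. Then for any indices 2 ≤ k_1 < k_2 < ... < k_j ≤ n, the probability that all events J_{k_1}, ..., J_{k_j} occur simultaneously equals ∏_{i=1}^{j} 2/k_i. In particular, the events J_2, ..., J_n are mutually independent and P(J_k) = 2/k. -/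
/-- The event `J_k`: after `k` elements have arrived (arrival order `σ`, times
`0, …, k-1`), the maximum-weight pair among the first `k` arrived elements
contains the `k`-th arriving element (the one arriving at time `k - 1`). -/
def EventJ {n : ℕ} (w : Sym2 (Fin n) → ℝ) (σ : Equiv.Perm (Fin n)) (k : ℕ) : Prop :=
  ∃ a b : Fin n, (a : ℕ) < k ∧ (b : ℕ) = k - 1 ∧ a ≠ b ∧
    ∀ c d : Fin n, (c : ℕ) < k → (d : ℕ) < k → c ≠ d →
      w s(σ c, σ d) ≤ w s(σ a, σ b)

open Finset Fin

/-- Generalized event for a partial arrival function. -/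
def EventG {n m : ℕ} (w : Sym2 (Fin n) → ℝ) (g : Fin m → Fin n) (k : ℕ) : Prop :=
  ∃ a b : Fin m, (a : ℕ) < k ∧ (b : ℕ) = k - 1 ∧ a ≠ b ∧
    ∀ c d : Fin m, (c : ℕ) < k → (d : ℕ) < k → c ≠ d →
      w s(g c, g d) ≤ w s(g a, g b)

lemma nat_card_sigma {ι : Type*} [Fintype ι] (f : ι → Type*) [∀ i, Finite (f i)] :
    Nat.card (Σ i, f i) = ∑ i, Nat.card (f i) := by
  letI : ∀ i, Fintype (f i) := fun i => Fintype.ofFinite _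
  simp [Nat.card_eq_fintype_card, Fintype.card_sigma]

lemma eventG_castSucc {n m : ℕ} (w : Sym2 (Fin n) → ℝ) (g : Fin (m + 1) → Fin n)
    {k : ℕ} (hk : k ≤ m) : EventG w g k ↔ EventG w (g ∘ Fin.castSucc) k := by
  have key : ∀ (c : Fin m), g c.castSucc = (g ∘ Fin.castSucc) c := fun _ => rfl
  constructor
  · rintro ⟨a, b, ha, hb, hab, hmax⟩
    have ha' : (a : ℕ) < m := lt_of_lt_of_le ha hk
    have hk0 : 0 < k := Nat.pos_of_ne_zero (by rintro rfl; omega)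
    have hb' : (b : ℕ) < m := by omega
    refine ⟨⟨a, ha'⟩, ⟨b, hb'⟩, ha, hb, ?_, ?_⟩
    · intro h
      rw [Fin.mk.injEq] at h
      exact hab (Fin.ext h)
    · intro c d hc hd hcd
      have hcd' : ((⟨(c:ℕ), by omega⟩ : Fin (m+1)) ≠ ⟨(d:ℕ), by omega⟩) := by
        intro h; rw [Fin.mk.injEq] at h; exact hcd (Fin.ext h)
      have h2 := hmax ⟨(c:ℕ), by omega⟩ ⟨(d:ℕ), by omega⟩ hc hd hcd'
      have e1 : (g ⟨(c:ℕ), by omega⟩ : Fin n) = (g ∘ Fin.castSucc) c := rfl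
      have e2 : (g ⟨(d:ℕ), by omega⟩ : Fin n) = (g ∘ Fin.castSucc) d := rfl
      have e4 : (g ∘ Fin.castSucc) (⟨(a:ℕ), ha'⟩ : Fin m) = g a := rfl
      have e5 : (g ∘ Fin.castSucc) (⟨(b:ℕ), hb'⟩ : Fin m) = g b := rfl
      rw [e1, e2] at h2
      rw [e4, e5]
      exact h2
  · rintro ⟨a, b, ha, hb, hab, hmax⟩
    refine ⟨a.castSucc, b.castSucc, ha, hb, ?_, ?_⟩
    · simpa using hab
    · intro c d hc hd hcd
      have hc' : (c : ℕ) < m := by omega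
      have hd' : (d : ℕ) < m := by omega
      have hcd' : ((⟨(c:ℕ), hc'⟩ : Fin m) ≠ ⟨(d:ℕ), hd'⟩) := by
        intro h; rw [Fin.mk.injEq] at h; exact hcd (Fin.ext h)
      have h2 := hmax ⟨(c:ℕ), hc'⟩ ⟨(d:ℕ), hd'⟩ hc hd hcd'
      have e1 : (g ∘ Fin.castSucc) (⟨(c:ℕ), hc'⟩ : Fin m) = g c := rfl
      have e2 : (g ∘ Fin.castSucc) (⟨(d:ℕ), hd'⟩ : Fin m) = g d := rfl
      rw [e1, e2] at h2
      exact h2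

/-- The set of arrival orders of `S` satisfying the events at times `ks`. -/
def Tset (n m : ℕ) (w : Sym2 (Fin n) → ℝ) (S : Finset (Fin n)) {j : ℕ} (ks : Fin j → ℕ) : Type :=
  {g : Fin m → Fin n // Function.Injective g ∧ (∀ x, g x ∈ S) ∧ ∀ i, EventG w g (ks i)}

instance (n m : ℕ) (w : Sym2 (Fin n) → ℝ) (S : Finset (Fin n)) {j : ℕ} (ks : Fin j → ℕ) :
    Finite (Tset n m w S ks) := by
  unfold Tset; infer_instance

lemma snoc_inj {m n : ℕ} {h : Fin m → Fin n} {v : Fin n} (hinj : Function.Injective h)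
    (hv : ∀ x, h x ≠ v) : Function.Injective (Fin.snoc h v) := by
  intro x y hxy
  rcases Fin.eq_castSucc_or_eq_last x with ⟨x', rfl⟩ | rfl <;>
    rcases Fin.eq_castSucc_or_eq_last y with ⟨y', rfl⟩ | rfl <;>
    simp only [Fin.snoc_castSucc, Fin.snoc_last] at hxy
  · rw [hinj hxy]
  · exact absurd hxy (hv x')
  · exact absurd hxy.symm (hv y')
  · rfl

noncomputable def equivStep {n m : ℕ} (w : Sym2 (Fin n) → ℝ) (S A : Finset (Fin n))
    {j j' : ℕ} (ks : Fin j → ℕ) (ks' : Fin j' → ℕ) (hAS : A ⊆ S)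
    (hA : ∀ g : Fin (m+1) → Fin n, Function.Injective g → (∀ x, g x ∈ S) →
      ((∀ i, EventG w g (ks i)) ↔
        (g (Fin.last m) ∈ A ∧ ∀ i', EventG w (g ∘ Fin.castSucc) (ks' i')))) :
    Tset n (m+1) w S ks ≃ Σ v : A, Tset n m w (S.erase ↑v) ks' where
  toFun g :=
    ⟨⟨g.1 (Fin.last m), ((hA g.1 g.2.1 g.2.2.1).mp g.2.2.2).1⟩,
      ⟨g.1 ∘ Fin.castSucc, g.2.1.comp (Fin.castSucc_injective m),
        fun x => Finset.mem_erase.mpr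
          ⟨fun e => absurd (g.2.1 e) (Fin.castSucc_lt_last x).ne, g.2.2.1 _⟩,
        ((hA g.1 g.2.1 g.2.2.1).mp g.2.2.2).2⟩⟩
  invFun vh := by
    refine ⟨Fin.snoc vh.2.1 vh.1, ?_, ?_, ?_⟩
    · exact snoc_inj vh.2.2.1 (fun x e => Finset.ne_of_mem_erase (vh.2.2.2.1 x) e)
    · intro x
      rcases Fin.eq_castSucc_or_eq_last x with ⟨x', rfl⟩ | rfl
      · simpa using Finset.mem_of_mem_erase (vh.2.2.2.1 x')
      · simpa using hAS vh.1.2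
    · refine (hA _ (snoc_inj vh.2.2.1 (fun x e => Finset.ne_of_mem_erase (vh.2.2.2.1 x) e))
        ?_ ).mpr ⟨by simpa using vh.1.2, ?_⟩
      · intro x
        rcases Fin.eq_castSucc_or_eq_last x with ⟨x', rfl⟩ | rfl
        · simpa using Finset.mem_of_mem_erase (vh.2.2.2.1 x')
        · simpa using hAS vh.1.2
      · rw [Fin.snoc_comp_castSucc]
        exact vh.2.2.2.2
  left_inv g := by
    apply Subtype.ext
    funext x
    rcases Fin.eq_castSucc_or_eq_last x with ⟨x', rfl⟩ | rfl <;> simp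
  right_inv vh := by
    obtain ⟨⟨v, hv⟩, ⟨h, hh⟩⟩ := vh
    have e0 : (Fin.snoc h v : Fin (m+1) → Fin n) (Fin.last m) = v := by simp
    refine Sigma.ext (Subtype.ext e0) ((Subtype.heq_iff_coe_eq ?_).mpr ?_)
    · intro g
      simp [e0]
    · exact Fin.snoc_comp_castSucc

lemma card_step {n m : ℕ} (w : Sym2 (Fin n) → ℝ) (S A : Finset (Fin n))
    {j j' : ℕ} (ks : Fin j → ℕ) (ks' : Fin j' → ℕ) (hAS : A ⊆ S)
    (hA : ∀ g : Fin (m+1) → Fin n, Function.Injective g → (∀ x, g x ∈ S) →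
      ((∀ i, EventG w g (ks i)) ↔
        (g (Fin.last m) ∈ A ∧ ∀ i', EventG w (g ∘ Fin.castSucc) (ks' i')))) :
    Nat.card (Tset n (m+1) w S ks) = ∑ v ∈ A, Nat.card (Tset n m w (S.erase v) ks') := by
  rw [Nat.card_congr (equivStep w S A ks ks' hAS hA), nat_card_sigma]
  rw [← Finset.sum_coe_sort A (fun v => Nat.card (Tset n m w (S.erase v) ks'))]

lemma surj_help {n m : ℕ} {g : Fin m → Fin n} {S : Finset (Fin n)}
    (hinj : Function.Injective g) (hmem : ∀ x, g x ∈ S) (hS : S.card = m) :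
    ∀ s ∈ S, ∃ x, g x = s := by
  intro s hs
  have h1 : Finset.image g Finset.univ ⊆ S := by
    intro t ht
    obtain ⟨x, -, rfl⟩ := Finset.mem_image.mp ht
    exact hmem x
  have h2 : Finset.image g Finset.univ = S := by
    apply Finset.eq_of_subset_of_card_le h1
    rw [Finset.card_image_of_injective _ hinj, Finset.card_univ, Fintype.card_fin, hS]
  rw [← h2] at hs
  obtain ⟨x, -, hx⟩ := Finset.mem_image.mp hs
  exact ⟨x, hx⟩

lemma hA_caseb {n m : ℕ} (w : Sym2 (Fin n) → ℝ)
    (hw : ∀ e f : Sym2 (Fin n), ¬ e.IsDiag → ¬ f.IsDiag → w e = w f → e = f)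
    (S : Finset (Fin n)) (hS : S.card = m + 1)
    {j' : ℕ} (ks : Fin (j' + 1) → ℕ) (hmono : StrictMono ks) (hlast : ks (Fin.last j') = m + 1)
    (x y : Fin n) (hx : x ∈ S) (hy : y ∈ S) (hxy : x ≠ y)
    (hmax : ∀ c d, c ∈ S → d ∈ S → c ≠ d → w s(c, d) ≤ w s(x, y)) :
    ∀ g : Fin (m + 1) → Fin n, Function.Injective g → (∀ z, g z ∈ S) →
      ((∀ i, EventG w g (ks i)) ↔
        (g (Fin.last m) ∈ ({x, y} : Finset (Fin n)) ∧
          ∀ i', EventG w (g ∘ Fin.castSucc) (ks (Fin.castSucc i')))) := by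
  intro g hg hmem
  have hkcs : ∀ i' : Fin j', ks (Fin.castSucc i') ≤ m := by
    intro i'
    have := hmono (Fin.castSucc_lt_last i')
    omega
  constructor
  · intro h
    refine ⟨?_, fun i' => (eventG_castSucc w g (hkcs i')).mp (h (Fin.castSucc i'))⟩
    have htop := h (Fin.last j')
    rw [hlast] at htop
    obtain ⟨a, b, ha, hb, hab, hmaxg⟩ := htop
    have hbl : b = Fin.last m := Fin.ext (by simpa using hb)
    subst hbl
    -- compare s(g a, g (last m)) with s(x, y)
    obtain ⟨c, hc⟩ := surj_help hg hmem hS x hx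
    obtain ⟨d, hd⟩ := surj_help hg hmem hS y hy
    have hcd : c ≠ d := fun e => hxy (by rw [← hc, ← hd, e])
    have h1 : w s(x, y) ≤ w s(g a, g (Fin.last m)) := by
      rw [← hc, ← hd]; exact hmaxg c d c.isLt d.isLt hcd
    have h2 : w s(g a, g (Fin.last m)) ≤ w s(x, y) :=
      hmax _ _ (hmem a) (hmem (Fin.last m)) (fun e => hab (hg e))
    have heq : s(g a, g (Fin.last m)) = s(x, y) := by
      apply hw _ _ ?_ ?_ (le_antisymm h2 h1)
      · rw [Sym2.mk_isDiag_iff]; exact fun e => hab (hg e)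
      · rw [Sym2.mk_isDiag_iff]; exact hxy
    rcases Sym2.eq_iff.mp heq with ⟨-, h⟩ | ⟨-, h⟩ <;> simp [h]
  · rintro ⟨hlmem, h⟩ i
    rcases Fin.eq_castSucc_or_eq_last i with ⟨i', rfl⟩ | rfl
    · exact (eventG_castSucc w g (hkcs i')).mpr (h i')
    · rw [hlast]
      -- build the witness for the top event
      have hpart : ∃ p, p ∈ S ∧ p ≠ g (Fin.last m) ∧ s(p, g (Fin.last m)) = s(x, y) := by
        rcases Finset.mem_insert.mp hlmem with h' | h'
        · exact ⟨y, hy, by rw [h']; exact fun e => hxy e.symm, by rw [h', Sym2.eq_swap]⟩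
        · rw [Finset.mem_singleton] at h'
          exact ⟨x, hx, by rw [h']; exact hxy, by rw [h']⟩
      obtain ⟨p, hpS, hpne, hpeq⟩ := hpart
      obtain ⟨a, hap⟩ := surj_help hg hmem hS p hpS
      have hane : a ≠ Fin.last m := fun e => hpne (by rw [← hap, e])
      refine ⟨a, Fin.last m, a.isLt, by simp, hane, ?_⟩
      intro c d hc hd hcd
      have : w s(g c, g d) ≤ w s(x, y) :=
        hmax _ _ (hmem c) (hmem d) (fun e => hcd (hg e))
      rwa [hap, hpeq]

lemma main_count {n : ℕ} (w : Sym2 (Fin n) → ℝ)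
    (hw : ∀ e f : Sym2 (Fin n), ¬ e.IsDiag → ¬ f.IsDiag → w e = w f → e = f) :
    ∀ (m : ℕ) (S : Finset (Fin n)), S.card = m → ∀ (j : ℕ) (ks : Fin j → ℕ),
      StrictMono ks → (∀ i, 2 ≤ ks i ∧ ks i ≤ m) →
      (Nat.card (Tset n m w S ks) : ℚ) = (Nat.factorial m : ℚ) * ∏ i, 2 / (ks i : ℚ) := by
  intro m
  induction m with
  | zero =>
    intro S hS j ks hmono hks
    haveI : IsEmpty (Fin j) := ⟨fun i => by have := hks i; omega⟩
    have h1 : Nat.card (Tset n 0 w S ks) = 1 := by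
      rw [Nat.card_eq_one_iff_unique]
      constructor
      · constructor
        intro a b
        apply Subtype.ext
        funext z
        exact absurd z.isLt (by omega)
      · exact ⟨⟨fun z => absurd z.isLt (by omega), fun z => absurd z.isLt (by omega),
          fun z => absurd z.isLt (by omega), fun i => isEmptyElim i⟩⟩
    rw [h1, Finset.univ_eq_empty, Finset.prod_empty, Nat.factorial_zero]
    norm_num
  | succ m ih =>
    intro S hS j ks hmono hks
    by_cases htop : ∀ i, ks i ≤ m
    · -- case (a): no constraint at time m+1
      have hA : ∀ g : Fin (m+1) → Fin n, Function.Injective g → (∀ z, g z ∈ S) →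
          ((∀ i, EventG w g (ks i)) ↔
            (g (Fin.last m) ∈ S ∧ ∀ i, EventG w (g ∘ Fin.castSucc) (ks i))) := by
        intro g hg hmem
        constructor
        · intro h
          exact ⟨hmem _, fun i => (eventG_castSucc w g (htop i)).mp (h i)⟩
        · rintro ⟨-, h⟩ i
          exact (eventG_castSucc w g (htop i)).mpr (h i)
      rw [card_step w S S ks ks subset_rfl hA]
      push_cast
      have heach : ∀ v ∈ S, (Nat.card (Tset n m w (S.erase v) ks) : ℚ) =
          (Nat.factorial m : ℚ) * ∏ i, 2 / (ks i : ℚ) := by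
        intro v hv
        exact ih (S.erase v) (by rw [Finset.card_erase_of_mem hv, hS]; omega) j ks hmono
          (fun i => ⟨(hks i).1, htop i⟩)
      rw [Finset.sum_congr rfl heach, Finset.sum_const, hS, nsmul_eq_mul,
        Nat.factorial_succ]
      push_cast
      ring
    · -- case (b): top constraint ks (last) = m + 1
      push_neg at htop
      obtain ⟨i0, hi0⟩ := htop
      cases j with
      | zero => exact isEmptyElim i0
      | succ j' =>
        have hlast : ks (Fin.last j') = m + 1 := by
          have h1 := (hks (Fin.last j')).2
          have h2 := hmono.monotone (Fin.le_last i0)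
          have h3 := (hks i0).2
          omega
        -- find the maximum-weight pair of S
        have hcard2 : 1 < S.card := by
          have := (hks (Fin.last j')).1
          omega
        obtain ⟨x0, hx0, y0, hy0, hxy0⟩ := Finset.one_lt_card.mp hcard2
        have hTne : ((S ×ˢ S).filter (fun p => p.1 ≠ p.2)).Nonempty :=
          ⟨(x0, y0), by simp [Finset.mem_filter, Finset.mem_product, hx0, hy0, hxy0]⟩
        obtain ⟨p, hp, hmaxp⟩ :=
          Finset.exists_max_image ((S ×ˢ S).filter (fun p => p.1 ≠ p.2))
            (fun p => w s(p.1, p.2)) hTne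
        rw [Finset.mem_filter, Finset.mem_product] at hp
        obtain ⟨⟨hpx, hpy⟩, hpne⟩ := hp
        have hmaxS : ∀ c d, c ∈ S → d ∈ S → c ≠ d → w s(c, d) ≤ w s(p.1, p.2) := by
          intro c d hc hd hcd
          exact hmaxp (c, d) (by simp [Finset.mem_filter, Finset.mem_product, hc, hd, hcd])
        have hA := hA_caseb w hw S hS ks hmono hlast p.1 p.2 hpx hpy hpne hmaxS
        have hsub : ({p.1, p.2} : Finset (Fin n)) ⊆ S := by
          intro z hz
          rcases Finset.mem_insert.mp hz with h | h
          · rw [h]; exact hpx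
          · rw [Finset.mem_singleton.mp h]; exact hpy
        rw [card_step w S {p.1, p.2} ks (ks ∘ Fin.castSucc) hsub hA]
        rw [Finset.sum_pair hpne]
        have heach : ∀ v ∈ S, (Nat.card (Tset n m w (S.erase v) (ks ∘ Fin.castSucc)) : ℚ) =
            (Nat.factorial m : ℚ) * ∏ i', 2 / (ks (Fin.castSucc i') : ℚ) := by
          intro v hv
          refine ih (S.erase v) (by rw [Finset.card_erase_of_mem hv, hS]; omega) j' _
            (hmono.comp (Fin.strictMono_castSucc)) ?_
          intro i'
          refine ⟨(hks _).1, ?_⟩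
          show ks (Fin.castSucc i') ≤ m
          have := hmono (Fin.castSucc_lt_last i')
          omega
        push_cast
        rw [heach p.1 hpx, heach p.2 hpy, Fin.prod_univ_castSucc, hlast]
        set P : ℚ := ∏ i' : Fin j', 2 / ((ks (Fin.castSucc i')) : ℚ) with hP
        have hm1 : ((m : ℚ) + 1) ≠ 0 := by positivity
        have h2 : (2 / ((m : ℚ) + 1)) * ((m : ℚ) + 1) = 2 := div_mul_cancel₀ 2 hm1
        rw [Nat.factorial_succ]
        push_cast
        have e : ((m : ℚ) + 1) * (m.factorial : ℚ) * (P * (2 / ((m : ℚ) + 1))) =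
            (m.factorial : ℚ) * P * (2 / ((m : ℚ) + 1) * ((m : ℚ) + 1)) := by ring
        rw [e, h2]
        ring

noncomputable def permEquiv {n j : ℕ} (w : Sym2 (Fin n) → ℝ) (ks : Fin j → ℕ) :
    {σ : Equiv.Perm (Fin n) // ∀ i, EventJ w σ (ks i)} ≃ Tset n n w Finset.univ ks where
  toFun σ := ⟨⇑σ.1, σ.1.injective, fun x => Finset.mem_univ _, σ.2⟩
  invFun g := ⟨Equiv.ofBijective g.1 (Finite.injective_iff_bijective.mp g.2.1), g.2.2.2⟩
  left_inv σ := Subtype.ext (Equiv.ext fun x => rfl)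
  right_inv g := rfl

lemma part1 {n : ℕ} (w : Sym2 (Fin n) → ℝ)
    (hw : ∀ e f : Sym2 (Fin n), ¬ e.IsDiag → ¬ f.IsDiag → w e = w f → e = f)
    (j : ℕ) (ks : Fin j → ℕ) (hmono : StrictMono ks)
    (hks : ∀ i, 2 ≤ ks i ∧ ks i ≤ n) :
    ((Nat.card {σ : Equiv.Perm (Fin n) // ∀ i : Fin j, EventJ w σ (ks i)} : ℚ)
        / (Nat.card (Equiv.Perm (Fin n)) : ℚ)
      = ∏ i : Fin j, 2 / (ks i : ℚ)) := by
  have h0 : Nat.card {σ : Equiv.Perm (Fin n) // ∀ i : Fin j, EventJ w σ (ks i)} =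
      Nat.card (Tset n n w Finset.univ ks) := Nat.card_congr (permEquiv w ks)
  have h1 : (Nat.card (Tset n n w Finset.univ ks) : ℚ) =
      (Nat.factorial n : ℚ) * ∏ i, 2 / (ks i : ℚ) := by
    apply main_count w hw n Finset.univ (by simp) j ks hmono hks
  have h2 : (Nat.card (Equiv.Perm (Fin n)) : ℚ) = (Nat.factorial n : ℚ) := by
    rw [Nat.card_eq_fintype_card, Fintype.card_perm, Fintype.card_fin]
  have h3 : (Nat.factorial n : ℚ) ≠ 0 := by
    exact_mod_cast Nat.factorial_ne_zero n
  rw [h0, h1, h2, mul_comm, mul_div_assoc, div_self h3, mul_one]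

theorem stmt_16 (n : ℕ) (w : Sym2 (Fin n) → ℝ)
    (hw : ∀ e f : Sym2 (Fin n), ¬ e.IsDiag → ¬ f.IsDiag → w e = w f → e = f)
    (j : ℕ) (ks : Fin j → ℕ) (hmono : StrictMono ks)
    (hks : ∀ i, 2 ≤ ks i ∧ ks i ≤ n) :
    ((Nat.card {σ : Equiv.Perm (Fin n) // ∀ i : Fin j, EventJ w σ (ks i)} : ℚ)
        / (Nat.card (Equiv.Perm (Fin n)) : ℚ)
      = ∏ i : Fin j, 2 / (ks i : ℚ))
    ∧ ∀ k : ℕ, 2 ≤ k → k ≤ n →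
        (Nat.card {σ : Equiv.Perm (Fin n) // EventJ w σ k} : ℚ)
            / (Nat.card (Equiv.Perm (Fin n)) : ℚ)
          = 2 / (k : ℚ) := by
  constructor
  · exact part1 w hw j ks hmono hks
  · intro k hk2 hkn
    have hmono1 : StrictMono (fun _ : Fin 1 => k) :=
      fun a b hab => absurd (Subsingleton.elim a b) hab.ne
    have h := part1 w hw 1 (fun _ => k) hmono1 (fun _ => ⟨hk2, hkn⟩)
    have e : {σ : Equiv.Perm (Fin n) // ∀ i : Fin 1, EventJ w σ ((fun _ => k) i)} ≃
        {σ : Equiv.Perm (Fin n) // EventJ w σ k} :=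
      Equiv.subtypeEquivRight (fun σ => ⟨fun h => h 0, fun h _ => h⟩)
    rw [Nat.card_congr e, Fin.prod_univ_one] at h
    exact h
end

section
/- For every integer k ≥ 1, (k+1)/(2k+1) · ∑_{i=0}^{k} [C(k,i)·C(k,k-i)/C(2k,k)] · 1/(k+1-i) = 1/(k+1). -/
/-!
Since `C(k, i) / (k + 1 - i) = C(k + 1, i) / (k + 1)` and `C(k, k - i) = C(k, i)`, the sum becomes
`∑ C(k, i) C(k + 1, i) / ((k + 1) C(2k, k))`, whose numerator is `C(2k + 1, k)` by Vandermonde's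
identity. Finally `(k + 1) C(2k + 1, k) = (2k + 1) C(2k, k)`.
-/

open Finset

namespace Nat

theorem sum_range_choose_mul_choose_add_one (k : ℕ) :
    ∑ i ∈ range (k + 1), k.choose i * (k + 1).choose i = (2 * k + 1).choose k := by
  rw [show 2 * k + 1 = (k + 1) + k by ring, add_choose_eq,
    Nat.sum_antidiagonal_eq_sum_range_succ_mk]
  refine sum_congr rfl fun i hi => ?_
  rw [choose_symm (Nat.lt_succ_iff.mp (mem_range.mp hi)), mul_comm]

theorem choose_two_mul_add_one_mul (k : ℕ) :
    (2 * k + 1).choose k * (k + 1) = (2 * k + 1) * (2 * k).choose k := by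
  have h := choose_mul_succ_eq (2 * k) k
  rw [show 2 * k + 1 - k = k + 1 by omega] at h
  rw [← h, mul_comm]

theorem cast_choose_div_add_one_sub {K : Type*} [Field K] [CharZero K] {k i : ℕ} (hi : i ≤ k) :
    (k.choose i : K) / (k + 1 - i) = (k + 1).choose i / (k + 1) := by
  have hsub : (k : K) + 1 - i ≠ 0 := by
    rw [← Nat.cast_one, ← Nat.cast_add, ← Nat.cast_sub (by omega)]
    exact_mod_cast (by omega : k + 1 - i ≠ 0)
  have h := congrArg (Nat.cast : ℕ → K) (choose_mul_succ_eq k i)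
  push_cast [Nat.cast_sub (by omega : i ≤ k + 1)] at h
  rw [div_eq_div_iff hsub (Nat.cast_add_one_ne_zero k)]
  exact h

end Nat

theorem sum_choose_mul_choose_div_central_div {K : Type*} [Field K] [CharZero K] (k : ℕ) :
    ∑ i ∈ range (k + 1),
        ((k.choose i : K) * (k.choose (k - i) : K) / ((2 * k).choose k : K))
          * (1 / ((k : K) + 1 - (i : K)))
      = (2 * k + 1) / (k + 1) ^ 2 := by
  have hcentral : ((2 * k).choose k : K) ≠ 0 := by
    exact_mod_cast (Nat.choose_pos (by omega : k ≤ 2 * k)).ne'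
  have hterm : ∀ i ∈ range (k + 1),
      ((k.choose i : K) * (k.choose (k - i) : K) / ((2 * k).choose k : K))
          * (1 / ((k : K) + 1 - (i : K)))
        = ((k.choose i * (k + 1).choose i : ℕ) : K) / ((k + 1) * (2 * k).choose k) := by
    intro i hi
    have hik := Nat.lt_succ_iff.mp (mem_range.mp hi)
    calc ((k.choose i : K) * (k.choose (k - i) : K) / ((2 * k).choose k : K))
          * (1 / ((k : K) + 1 - (i : K)))
        _ = k.choose i * (k.choose i / (k + 1 - i)) / (2 * k).choose k := by
          rw [Nat.choose_symm hik]; ring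
        _ = k.choose i * ((k + 1).choose i / (k + 1)) / (2 * k).choose k := by
          rw [Nat.cast_choose_div_add_one_sub hik]
        _ = _ := by rw [Nat.cast_mul, mul_div_assoc', div_div]
  have hnum := congrArg (Nat.cast : ℕ → K) (Nat.choose_two_mul_add_one_mul k)
  push_cast at hnum
  rw [sum_congr rfl hterm, ← sum_div, ← Nat.cast_sum, Nat.sum_range_choose_mul_choose_add_one,
    div_eq_div_iff (mul_ne_zero (Nat.cast_add_one_ne_zero k) hcentral)
      (pow_ne_zero 2 (Nat.cast_add_one_ne_zero k))]
  linear_combination ((k : K) + 1) * hnum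

theorem stmt_19_general (k : ℕ) :
    (((k : ℚ) + 1) / (2 * (k : ℚ) + 1))
        * ∑ i ∈ Finset.range (k + 1),
            ((k.choose i : ℚ) * (k.choose (k - i) : ℚ) / ((2 * k).choose k : ℚ))
              * (1 / ((k : ℚ) + 1 - (i : ℚ)))
      = 1 / ((k : ℚ) + 1) := by
  rw [sum_choose_mul_choose_div_central_div]
  field_simp

theorem stmt_19 (k : ℕ) (hk : 1 ≤ k) :
    (((k : ℚ) + 1) / (2 * (k : ℚ) + 1))
        * ∑ i ∈ Finset.range (k + 1),
            ((k.choose i : ℚ) * (k.choose (k - i) : ℚ) / ((2 * k).choose k : ℚ))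
              * (1 / ((k : ℚ) + 1 - (i : ℚ)))
      = 1 / ((k : ℚ) + 1) :=
  stmt_19_general k
end
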